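/- There exists a connected edge-labelled acyclic directed multigraph G with subgraphs G'₁, G'₂ and G''₁ such that V(G) = V(G'₁) ∪ V(G'₂) but V(G''₁) ≠ V(G), and G is not isomorphic to (G/V(G'₁)/V(G'₂)) ⧅ (G/V(G''₁)); in particular, the hypothesis V(G) = ⋃ⱼ V(G''ⱼ) in the Cartesian decomposition theorem cannot be dropped. -/

import Mathlib

noncomputable section

/-- An edge-labelled directed multigraph: arcs `A`, vertices `V`, labels `L`,
with incidence functions `tail`, `head` and labelling `label`. -/
structure LGraph (V : Type*) (A : Type*) (L : Type*) where
  tail : A → V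
  head : A → V
  label : A → L

variable {V V₁ V₂ W A A₁ A₂ B L : Type*}

/-- A label-preserving isomorphism of edge-labelled directed multigraphs. -/
structure LIso (G : LGraph V A L) (H : LGraph W B L) where
  vEquiv : V ≃ W
  aEquiv : A ≃ B
  map_tail : ∀ a, H.tail (aEquiv a) = vEquiv (G.tail a)
  map_head : ∀ a, H.head (aEquiv a) = vEquiv (G.head a)
  map_label : ∀ a, H.label (aEquiv a) = G.label a

/-- The arc (step) relation of a directed multigraph. -/
def LGraph.arcRel (G : LGraph V A L) (u w : V) : Prop :=
  ∃ a, G.tail a = u ∧ G.head a = w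

/-- A graph is acyclic if it has no directed cycle. -/
def LGraph.Acyclic (G : LGraph V A L) : Prop :=
  ∀ v, ¬ Relation.TransGen G.arcRel v v

/-- Adjacency in the underlying undirected multigraph. -/
def LGraph.adj (G : LGraph V A L) (u w : V) : Prop :=
  ∃ a, (G.tail a = u ∧ G.head a = w) ∨ (G.tail a = w ∧ G.head a = u)

/-- Connectivity of the underlying undirected multigraph. -/
def LGraph.Connected (G : LGraph V A L) : Prop :=
  Nonempty V ∧ ∀ u w : V, Relation.ReflTransGen G.adj u w

/-- Number of vertices of a graph. -/
def vertCard {V A L : Type*} (_G : LGraph V A L) : ℕ := Nat.card V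

/-- Number of arcs of a graph. -/
def arcCard {V A L : Type*} (_G : LGraph V A L) : ℕ := Nat.card A

/-- The quotient map used in contraction: vertices in `X` go to the new
vertex `none`, the others to themselves. -/
def contractProj (X : Set V) (v : V) : Option {v : V // v ∉ X} :=
  letI := Classical.dec (v ∈ X)
  if h : v ∈ X then none else some ⟨v, h⟩

/-- Contraction `G/X`: replace `X` by a single new vertex (`none`), delete the
arcs with both ends in `X`, redirect boundary arcs, keeping labels. -/
def LGraph.contract (G : LGraph V A L) (X : Set V) :
    LGraph (Option {v : V // v ∉ X}) {a : A // G.tail a ∉ X ∨ G.head a ∉ X} L where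
  tail a := contractProj X (G.tail a.1)
  head a := contractProj X (G.head a.1)
  label a := G.label a.1

/-- Simultaneous (successive) contraction of the fibres of `f : V → ι`:
each fibre is replaced by a single vertex, arcs internal to a fibre are
deleted, boundary arcs are redirected, labels kept. -/
def LGraph.contractFamily {ι : Type*} (G : LGraph V A L) (f : V → ι) :
    LGraph ι {a : A // f (G.tail a) ≠ f (G.head a)} L where
  tail a := f (G.tail a.1)
  head a := f (G.head a.1)
  label a := G.label a.1

/-- Induced subgraph on a vertex set `S`: keep all arcs with both ends in `S`. -/
def LGraph.induce (G : LGraph V A L) (S : Set V) :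
    LGraph S {a : A // G.tail a ∈ S ∧ G.head a ∈ S} L where
  tail a := ⟨G.tail a.1, a.2.1⟩
  head a := ⟨G.head a.1, a.2.2⟩
  label a := G.label a.1

/-- The Cartesian product of two edge-labelled directed multigraphs. -/
def cartProd (G₁ : LGraph V₁ A₁ L) (G₂ : LGraph V₂ A₂ L) :
    LGraph (V₁ × V₂) (A₁ × V₂ ⊕ A₂ × V₁) L where
  tail x := Sum.elim (fun p => (G₁.tail p.1, p.2)) (fun p => (p.2, G₂.tail p.1)) x
  head x := Sum.elim (fun p => (G₁.head p.1, p.2)) (fun p => (p.2, G₂.head p.1)) x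
  label x := Sum.elim (fun p => G₁.label p.1) (fun p => G₂.label p.1) x

/-- An arc of the Cartesian product is asynchronous if its label is not shared
by the other factor. -/
def Asynchronous (G₁ : LGraph V₁ A₁ L) (G₂ : LGraph V₂ A₂ L) (x : A₁ × V₂ ⊕ A₂ × V₁) : Prop :=
  Sum.elim (fun p => ∀ b : A₂, G₂.label b ≠ G₁.label p.1)
           (fun p => ∀ a : A₁, G₁.label a ≠ G₂.label p.1) x

/-- The intermediate product `G₁ ⊠ G₂`: asynchronous Cartesian arcs together
with one diagonal arc for each synchronising pair of arcs (same label). -/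
def interProd (G₁ : LGraph V₁ A₁ L) (G₂ : LGraph V₂ A₂ L) :
    LGraph (V₁ × V₂)
      ({x : A₁ × V₂ ⊕ A₂ × V₁ // Asynchronous G₁ G₂ x} ⊕
        {p : A₁ × A₂ // G₁.label p.1 = G₂.label p.2}) L where
  tail x := Sum.elim (fun y => (cartProd G₁ G₂).tail y.1)
      (fun p => (G₁.tail p.1.1, G₂.tail p.1.2)) x
  head x := Sum.elim (fun y => (cartProd G₁ G₂).head y.1)
      (fun p => (G₁.head p.1.1, G₂.head p.1.2)) x
  label x := Sum.elim (fun y => (cartProd G₁ G₂).label y.1) (fun p => G₁.label p.1.1) x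

/-- The set of vertices that survive the vertex-removal step of the VRSP:
the largest set `S` such that every vertex of `S` either is a source of the
Cartesian product or has an incoming intermediate-product arc from `S`.
(Vertices that become sources of the remaining intermediate product while not
being sources of the Cartesian product are removed one by one.) -/
def keptSet (G₁ : LGraph V₁ A₁ L) (G₂ : LGraph V₂ A₂ L) : Set (V₁ × V₂) :=
  ⋃₀ {S | ∀ v ∈ S, (¬ ∃ e, (cartProd G₁ G₂).head e = v) ∨
      ∃ e, (interProd G₁ G₂).head e = v ∧ (interProd G₁ G₂).tail e ∈ S}

/-- The vertex-removing synchronised product (VRSP) `G₁ ⧅ G₂`. -/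
def vrsp (G₁ : LGraph V₁ A₁ L) (G₂ : LGraph V₂ A₂ L) :
    LGraph (keptSet G₁ G₂)
      {e // (interProd G₁ G₂).tail e ∈ keptSet G₁ G₂ ∧
            (interProd G₁ G₂).head e ∈ keptSet G₁ G₂} L where
  tail e := ⟨(interProd G₁ G₂).tail e.1, e.2.1⟩
  head e := ⟨(interProd G₁ G₂).head e.1, e.2.2⟩
  label e := (interProd G₁ G₂).label e.1

/-- A subgraph of an edge-labelled directed multigraph. -/
structure LGraph.Subgraph (G : LGraph V A L) where
  verts : Set V
  arcs : Set A
  tail_mem : ∀ a ∈ arcs, G.tail a ∈ verts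
  head_mem : ∀ a ∈ arcs, G.head a ∈ verts

/-- A subgraph regarded as a graph in its own right. -/
def LGraph.Subgraph.toLGraph {G : LGraph V A L} (H : G.Subgraph) : LGraph H.verts H.arcs L where
  tail a := ⟨G.tail a.1, H.tail_mem a.1 a.2⟩
  head a := ⟨G.head a.1, H.head_mem a.1 a.2⟩
  label a := G.label a.1

/-- The labelled directed path with `m+1` vertices and arcs `vᵢ → vᵢ₊₁`
labelled `lab i`. -/
def pathGraph (m : ℕ) (lab : Fin m → L) : LGraph (Fin (m+1)) (Fin m) L where
  tail i := i.castSucc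
  head i := i.succ
  label := lab

/-! The witness `G` is the Cartesian product of an `a`-arc and a `b`-arc. Contracting both rows
gives two parallel `b`-arcs `0 → 1`; contracting only the bottom row gives a graph on `∗, u₅, u₆`
whose `b`-arcs leave `∗`. As `b` is shared, the only asynchronous arcs of the intermediate product
are the two copies of `u₅ → u₆`, and every synchronised arc leaves `(0, ∗)` for row `1`. So
`(1, ∗)` and `(0, u₅)` have Cartesian in-arcs but no intermediate in-arcs, `(0, u₆)` is entered
only from `(0, u₅)`, and the product keeps at most three vertices, while `G` has four. -/

namespace LGraph

instance (G : LGraph V A L) : Std.Symm G.adj := ⟨fun _ _ ⟨a, h⟩ => ⟨a, h.symm⟩⟩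

theorem connected_of_forall_reflTransGen_adj (G : LGraph V A L) (r : V)
    (h : ∀ v, Relation.ReflTransGen G.adj r v) : G.Connected :=
  ⟨⟨r⟩, fun u w => (symm (h u)).trans (h w)⟩

theorem acyclic_of_forall_lt {β : Type*} [Preorder β] (G : LGraph V A L) (φ : V → β)
    (h : ∀ a, φ (G.tail a) < φ (G.head a)) : G.Acyclic := by
  intro v hv
  have hlt := hv.lift φ (by rintro _ _ ⟨a, rfl, rfl⟩; exact h a)
  rw [Relation.transGen_eq_self] at hlt
  exact lt_irrefl _ hlt

def inducedSubgraph (G : LGraph V A L) (S : Set V) : G.Subgraph where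
  verts := S
  arcs := {a | G.tail a ∈ S ∧ G.head a ∈ S}
  tail_mem _ ha := ha.1
  head_mem _ ha := ha.2

end LGraph

theorem contractProj_of_mem {X : Set V} {v : V} (h : v ∈ X) : contractProj X v = none :=
  dif_pos h

theorem contractProj_of_notMem {X : Set V} {v : V} (h : v ∉ X) :
    contractProj X v = some ⟨v, h⟩ :=
  dif_neg h

theorem notMem_keptSet (G₁ : LGraph V₁ A₁ L) (G₂ : LGraph V₂ A₂ L) {v : V₁ × V₂}
    (hcart : ∃ e, (cartProd G₁ G₂).head e = v)
    (hinter : ∀ e, (interProd G₁ G₂).head e = v → (interProd G₁ G₂).tail e ∉ keptSet G₁ G₂) :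
    v ∉ keptSet G₁ G₂ := by
  rintro ⟨S, hS, hvS⟩
  rcases hS v hvS with hsource | ⟨e, hhead, htail⟩
  · exact hsource hcart
  · exact hinter e hhead ⟨S, hS, htail⟩

/-- The vertices `0, 1, 2, 3` are `u₂, u₃, u₅, u₆`, the labels `0, 1` are `a, b`, and vertex `v`
lies in row `bCoord v`. -/
def squareGraph : LGraph (Fin 4) (Fin 4) (Fin 2) where
  tail := ![0, 2, 0, 1]
  head := ![1, 3, 2, 3]
  label := ![0, 0, 1, 1]

def bCoord : Fin 4 → Fin 2 := ![0, 0, 1, 1]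

abbrev bottomRow : Set (Fin 4) := {v | bCoord v = 0}

theorem squareGraph_connected : squareGraph.Connected := by
  refine squareGraph.connected_of_forall_reflTransGen_adj 0 fun v => ?_
  fin_cases v
  · exact .refl
  · exact .single ⟨0, .inl ⟨rfl, rfl⟩⟩
  · exact .single ⟨2, .inl ⟨rfl, rfl⟩⟩
  · exact .tail (.single ⟨0, .inl ⟨rfl, rfl⟩⟩) ⟨3, .inl ⟨rfl, rfl⟩⟩

theorem squareGraph_acyclic : squareGraph.Acyclic :=
  squareGraph.acyclic_of_forall_lt id (by decide)

abbrev squareQuot := squareGraph.contractFamily bCoord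

abbrev squareContract := squareGraph.contract bottomRow

abbrev squareProd := interProd squareQuot squareContract

abbrev squareKept := keptSet squareQuot squareContract

def u₅ : {v : Fin 4 // v ∉ bottomRow} := ⟨2, by decide⟩

def u₆ : {v : Fin 4 // v ∉ bottomRow} := ⟨3, by decide⟩

theorem squareQuot_arc :
    ∀ a, squareQuot.tail a = 0 ∧ squareQuot.head a = 1 ∧ squareQuot.label a = 1 := by
  decide

theorem squareContract_arc_of_label_ne_one : ∀ b, squareContract.label b ≠ 1 → b.1 = 1 := by
  decide

theorem squareContract_arc_of_label_eq_one : ∀ b, squareContract.label b = 1 →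
    squareGraph.tail b.1 ∈ bottomRow ∧ squareGraph.head b.1 ∉ bottomRow := by
  decide

theorem squareProd_arc (e) :
    (∃ i, squareProd.tail e = (i, some u₅) ∧ squareProd.head e = (i, some u₆)) ∨
      (squareProd.tail e = (0, none) ∧ ∃ w, squareProd.head e = (1, some w)) := by
  have hb : squareContract.label ⟨2, by decide⟩ = 1 := rfl
  rcases e with ⟨⟨a, v⟩ | ⟨b, i⟩, hasync⟩ | ⟨⟨a, b⟩, hab⟩
  · exact absurd (hb.trans (squareQuot_arc a).2.2.symm) (hasync _)
  · have hb1 : b.1 = 1 := squareContract_arc_of_label_ne_one b (hasync ⟨2, by decide⟩ ·.symm)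
    refine .inl ⟨i, ?_, ?_⟩ <;>
      simp only [interProd, cartProd, LGraph.contract, Sum.elim_inl, Sum.elim_inr, hb1]
    exacts [congrArg _ (contractProj_of_notMem _), congrArg _ (contractProj_of_notMem _)]
  · obtain ⟨hta, hha, hla⟩ := squareQuot_arc a
    obtain ⟨htb, hhb⟩ := squareContract_arc_of_label_eq_one b (hab.symm.trans hla)
    refine .inr ⟨?_, ⟨_, hhb⟩, ?_⟩ <;> simp only [interProd, LGraph.contract, Sum.elim_inr]
    · rw [contractProj_of_mem htb, hta]
    · rw [contractProj_of_notMem hhb, hha]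

theorem one_none_notMem_squareKept : ((1 : Fin 2), none) ∉ squareKept :=
  notMem_keptSet _ _ ⟨.inl (⟨2, by decide⟩, none), rfl⟩ fun e he => by
    rcases squareProd_arc e with ⟨i, -, hhead⟩ | ⟨-, w, hhead⟩ <;> simp [he] at hhead

theorem zero_u₅_notMem_squareKept : ((0 : Fin 2), some u₅) ∉ squareKept :=
  notMem_keptSet _ _ ⟨.inr (⟨2, by decide⟩, 0), congrArg _ (contractProj_of_notMem _)⟩
    fun e he => by
      rcases squareProd_arc e with ⟨i, -, hhead⟩ | ⟨-, w, hhead⟩ <;> simp [he, u₅, u₆] at hhead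

theorem zero_u₆_notMem_squareKept : ((0 : Fin 2), some u₆) ∉ squareKept :=
  notMem_keptSet _ _ ⟨.inr (⟨3, by decide⟩, 0), congrArg _ (contractProj_of_notMem _)⟩
    fun e he => by
      rcases squareProd_arc e with ⟨i, htail, hhead⟩ | ⟨-, w, hhead⟩
      · obtain rfl : i = 0 := congrArg Prod.fst (hhead.symm.trans he)
        exact htail ▸ zero_u₅_notMem_squareKept
      · simp [he] at hhead

theorem squareKept_subset :
    squareKept ⊆ ↑({(0, none), (1, some u₅), (1, some u₆)} :
      Finset (Fin 2 × Option {v : Fin 4 // v ∉ bottomRow})) := by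
  intro v hv
  have hcases : ∀ v : Fin 2 × Option {v : Fin 4 // v ∉ bottomRow},
      v = (1, none) ∨ v = (0, some u₅) ∨ v = (0, some u₆) ∨
        v ∈ ({(0, none), (1, some u₅), (1, some u₆)} : Finset _) := by
    decide
  rcases hcases v with rfl | rfl | rfl | h
  exacts [absurd hv one_none_notMem_squareKept, absurd hv zero_u₅_notMem_squareKept,
    absurd hv zero_u₆_notMem_squareKept, h]

theorem card_squareKept_le : Nat.card squareKept ≤ 3 := by
  rw [Nat.card_coe_set_eq]
  exact (Set.ncard_le_ncard squareKept_subset).trans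
    ((Set.ncard_coe_finset _).trans_le Finset.card_le_three)

/-- there is a connected acyclic edge-labelled directed
multigraph `G` with subgraphs `G'₁, G'₂, G''₁` such that
`V(G) = V(G'₁) ∪ V(G'₂)` (the successive contraction of `V(G'₁)`, `V(G'₂)` is
encoded by the quotient map `f`) but `V(G''₁) ≠ V(G)`, and `G` is not
isomorphic to `(G/V(G'₁)/V(G'₂)) ⧅ (G/V(G''₁))`: the hypothesis
`V(G) = ⋃ⱼ V(G''ⱼ)` of the Cartesian decomposition theorem cannot be
dropped. -/
theorem decomposition_hypothesis_necessary :
    ∃ (G : LGraph (Fin 4) (Fin 4) (Fin 2)) (G'₁ G'₂ G''₁ : G.Subgraph)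
      (f : Fin 4 → Fin 2),
      G.Connected ∧ G.Acyclic ∧
      (∀ v, v ∈ G'₁.verts ↔ f v = 0) ∧
      (∀ v, v ∈ G'₂.verts ↔ f v = 1) ∧
      G'₁.verts ∪ G'₂.verts = Set.univ ∧
      G''₁.verts.Nonempty ∧ G''₁.verts ≠ Set.univ ∧
      IsEmpty (LIso G (vrsp (G.contractFamily f) (G.contract G''₁.verts))) := by
  refine ⟨squareGraph, squareGraph.inducedSubgraph {v | bCoord v = 0},
    squareGraph.inducedSubgraph {v | bCoord v = 1}, squareGraph.inducedSubgraph bottomRow, bCoord,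
    squareGraph_connected, squareGraph_acyclic, fun _ => Iff.rfl, fun _ => Iff.rfl,
    Set.eq_univ_of_forall fun v => show bCoord v = 0 ∨ bCoord v = 1 by omega, ⟨0, rfl⟩,
    (Set.ne_univ_iff_exists_notMem bottomRow).2 ⟨2, by decide⟩, ⟨fun iso => ?_⟩⟩
  have := (Nat.card_congr iso.vEquiv).trans_le card_squareKept_le
  simp at this
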